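/- If z₁ is a nowhere-vanishing solution of (Dx² − Dy + c)z = 0 and M(u) = uₓ − ((z₁)ₓ/z₁)·u, then M(L(u)) = L₁(M(u)) for all smooth u, where L₁ = Dx² − Dy − (2(z₁)ₓ² − z₁(z₁)_y − (z₁)ₓₓ·z₁)/z₁². -/

import Mathlib

noncomputable section
open Real

/-- Smooth functions on the plane, as plain functions `ℝ × ℝ → ℝ`. -/
abbrev F := (ℝ × ℝ) → ℝ

/-- Partial derivative in `x`. -/
noncomputable def Dx (f : F) : F := fun p => fderiv ℝ f p (1, 0)

/-- Partial derivative in `y`. -/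
noncomputable def Dy (f : F) : F := fun p => fderiv ℝ f p (0, 1)

/-- The parabolic operator `L = Dx² + a·Dx + b·Dy + c`. -/
noncomputable def Lop (a b c : F) (u : F) : F :=
  fun p => Dx (Dx u) p + a p * Dx u p + b p * Dy u p + c p * u p

lemma dA {f : F} (hf : ContDiff ℝ (⊤ : ℕ∞) f) (p : ℝ × ℝ) : DifferentiableAt ℝ f p :=
  hf.differentiable (by simp) p

lemma contDiff_Dx {f : F} (hf : ContDiff ℝ (⊤ : ℕ∞) f) : ContDiff ℝ (⊤ : ℕ∞) (Dx f) :=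
  (hf.fderiv_right (by simp)).clm_apply contDiff_const

lemma contDiff_Dy {f : F} (hf : ContDiff ℝ (⊤ : ℕ∞) f) : ContDiff ℝ (⊤ : ℕ∞) (Dy f) :=
  (hf.fderiv_right (by simp)).clm_apply contDiff_const

lemma Dx_add {f g : F} {p : ℝ × ℝ} (hf : DifferentiableAt ℝ f p)
    (hg : DifferentiableAt ℝ g p) :
    Dx (fun q => f q + g q) p = Dx f p + Dx g p := by
  simp [Dx, fderiv_fun_add hf hg]

lemma Dx_sub {f g : F} {p : ℝ × ℝ} (hf : DifferentiableAt ℝ f p)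
    (hg : DifferentiableAt ℝ g p) :
    Dx (fun q => f q - g q) p = Dx f p - Dx g p := by
  simp [Dx, fderiv_fun_sub hf hg]

lemma Dx_mul {f g : F} {p : ℝ × ℝ} (hf : DifferentiableAt ℝ f p)
    (hg : DifferentiableAt ℝ g p) :
    Dx (fun q => f q * g q) p = f p * Dx g p + g p * Dx f p := by
  simp [Dx, fderiv_fun_mul hf hg]

lemma Dy_sub {f g : F} {p : ℝ × ℝ} (hf : DifferentiableAt ℝ f p)
    (hg : DifferentiableAt ℝ g p) :
    Dy (fun q => f q - g q) p = Dy f p - Dy g p := by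
  simp [Dy, fderiv_fun_sub hf hg]

lemma Dy_mul {f g : F} {p : ℝ × ℝ} (hf : DifferentiableAt ℝ f p)
    (hg : DifferentiableAt ℝ g p) :
    Dy (fun q => f q * g q) p = f p * Dy g p + g p * Dy f p := by
  simp [Dy, fderiv_fun_mul hf hg]

lemma clairaut {f : F} (hf : ContDiff ℝ (⊤ : ℕ∞) f) (p : ℝ × ℝ) :
    Dy (Dx f) p = Dx (Dy f) p := by
  have hdf : ContDiff ℝ (⊤ : ℕ∞) (fderiv ℝ f) := hf.fderiv_right (by simp)
  have hdfd : DifferentiableAt ℝ (fderiv ℝ f) p := hdf.differentiable (by simp) p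
  have key : ∀ v w : ℝ × ℝ,
      fderiv ℝ (fun q => fderiv ℝ f q v) p w = fderiv ℝ (fderiv ℝ f) p w v := by
    intro v w
    rw [fderiv_clm_apply hdfd (differentiableAt_const v)]
    simp
  have hsym := second_derivative_symmetric
    (fun y => (hf.differentiable (by simp) y).hasFDerivAt) hdfd.hasFDerivAt (0,1) (1,0)
  show fderiv ℝ (fun q => fderiv ℝ f q (1,0)) p (0,1) =
    fderiv ℝ (fun q => fderiv ℝ f q (0,1)) p (1,0)
  rw [key, key, hsym]

set_option maxHeartbeats 2000000 in
theorem moutard_aux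
    (c z₁ g u : F) (hc : ContDiff ℝ (⊤ : ℕ∞) c) (hz : ContDiff ℝ (⊤ : ℕ∞) z₁)
    (hz0 : ∀ p, z₁ p ≠ 0)
    (hg : g = fun q => Dx z₁ q / z₁ q)
    (hsol : ∀ p, Dx (Dx z₁) p - Dy z₁ p + c p * z₁ p = 0)
    (hu : ContDiff ℝ (⊤ : ℕ∞) u) :
    ∀ p, Dx (fun q => Dx (Dx u) q - Dy u q + c q * u q) p
        - g p * (Dx (Dx u) p - Dy u p + c p * u p) =
      Dx (Dx (fun q => Dx u q - g q * u q)) p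
        - Dy (fun q => Dx u q - g q * u q) p
        - ((2 * (Dx z₁ p) ^ 2 - z₁ p * Dy z₁ p - Dx (Dx z₁) p * z₁ p) / (z₁ p) ^ 2)
          * (Dx u p - g p * u p) := by
  have hgs : ContDiff ℝ (⊤ : ℕ∞) g := by rw [hg]; exact (contDiff_Dx hz).div hz hz0
  have hux : ContDiff ℝ (⊤ : ℕ∞) (Dx u) := contDiff_Dx hu
  have huxx : ContDiff ℝ (⊤ : ℕ∞) (Dx (Dx u)) := contDiff_Dx hux
  have huy : ContDiff ℝ (⊤ : ℕ∞) (Dy u) := contDiff_Dy hu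
  have hzx : ContDiff ℝ (⊤ : ℕ∞) (Dx z₁) := contDiff_Dx hz
  have hzxx : ContDiff ℝ (⊤ : ℕ∞) (Dx (Dx z₁)) := contDiff_Dx hzx
  have hzy : ContDiff ℝ (⊤ : ℕ∞) (Dy z₁) := contDiff_Dy hz
  have hgx : ContDiff ℝ (⊤ : ℕ∞) (Dx g) := contDiff_Dx hgs
  -- basic relations
  have Rg : ∀ q, g q * z₁ q = Dx z₁ q := by
    intro q; rw [hg]; exact div_mul_cancel₀ _ (hz0 q)
  have hRg : (fun q => g q * z₁ q) = Dx z₁ := funext Rg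
  have Rc : ∀ q, c q * z₁ q = Dy z₁ q - Dx (Dx z₁) q := fun q => by linarith [hsol q]
  have hRc : (fun q => c q * z₁ q) = fun q => Dy z₁ q - Dx (Dx z₁) q := funext Rc
  -- first derivatives of g and c
  have R4 : ∀ q, g q * Dx z₁ q + z₁ q * Dx g q = Dx (Dx z₁) q := by
    intro q
    have h1 := Dx_mul (dA hgs q) (dA hz q)
    rw [hRg] at h1
    linarith
  have hR4 : (fun q => g q * Dx z₁ q + z₁ q * Dx g q) = Dx (Dx z₁) := funext R4
  have R5 : ∀ q, g q * Dy z₁ q + z₁ q * Dy g q = Dx (Dy z₁) q := by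
    intro q
    have h1 := Dy_mul (dA hgs q) (dA hz q)
    rw [hRg] at h1
    rw [← clairaut hz q]
    linarith
  have R6 : ∀ q, (g q * Dx (Dx z₁) q + Dx z₁ q * Dx g q)
      + (z₁ q * Dx (Dx g) q + Dx g q * Dx z₁ q) = Dx (Dx (Dx z₁)) q := by
    intro q
    have h1 := Dx_add (dA (hgs.mul hzx) q) (dA (hz.mul hgx) q)
    rw [hR4] at h1
    rw [Dx_mul (dA hgs q) (dA hzx q), Dx_mul (dA hz q) (dA hgx q)] at h1
    linarith
  have R2 : ∀ q, c q * Dx z₁ q + z₁ q * Dx c q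
      = Dx (Dy z₁) q - Dx (Dx (Dx z₁)) q := by
    intro q
    have h1 := Dx_mul (dA hc q) (dA hz q)
    rw [hRc] at h1
    rw [Dx_sub (dA hzy q) (dA hzxx q)] at h1
    linarith
  intro p
  -- expand the left-hand side
  rw [Dx_add (f := fun q => Dx (Dx u) q - Dy u q) (g := fun q => c q * u q)
      (dA (huxx.sub huy) p) (dA (hc.mul hu) p),
    Dx_sub (dA huxx p) (dA huy p), Dx_mul (dA hc p) (dA hu p)]
  -- expand the right-hand side
  have hDxM : Dx (fun q => Dx u q - g q * u q)
      = fun q => Dx (Dx u) q - (g q * Dx u q + u q * Dx g q) := by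
    funext q
    rw [Dx_sub (dA hux q) (dA (hgs.mul hu) q), Dx_mul (dA hgs q) (dA hu q)]
  rw [hDxM,
    Dx_sub (f := Dx (Dx u)) (g := fun q => g q * Dx u q + u q * Dx g q)
      (dA huxx p) (dA ((hgs.mul hux).add (hu.mul hgx)) p),
    Dx_add (dA (hgs.mul hux) p) (dA (hu.mul hgx) p),
    Dx_mul (dA hgs p) (dA hux p), Dx_mul (dA hu p) (dA hgx p),
    Dy_sub (dA hux p) (dA (hgs.mul hu) p), Dy_mul (dA hgs p) (dA hu p),
    clairaut hu p]
  -- clear the single denominator and finish by linear combination of the relations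
  have h2 : (z₁ p) ^ 2 ≠ 0 := pow_ne_zero 2 (hz0 p)
  rw [eq_sub_iff_add_eq, div_mul_eq_mul_div, add_div', div_eq_iff h2]
  · linear_combination u p * z₁ p * R6 p + u p * z₁ p * R2 p - u p * z₁ p * R5 p
      + (2 * Dx u p * z₁ p - 2 * u p * Dx z₁ p) * R4 p
      + (Dx u p * z₁ p - u p * Dx z₁ p - u p * z₁ p * g p) * Rc p
      + (-2 * Dx u p * Dx z₁ p + u p * Dx (Dx z₁) p + u p * Dy z₁ p) * Rg p
  · exact h2

theorem moutard_X_transformation_from_solution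
    (c z₁ : F) (hc : ContDiff ℝ (⊤ : ℕ∞) c) (hz : ContDiff ℝ (⊤ : ℕ∞) z₁)
    (hz0 : ∀ p, z₁ p ≠ 0)
    (hsol : ∀ p, Dx (Dx z₁) p - Dy z₁ p + c p * z₁ p = 0)
    (u : F) (hu : ContDiff ℝ (⊤ : ℕ∞) u) :
    ∀ p, Dx (fun q => Dx (Dx u) q - Dy u q + c q * u q) p
        - (Dx z₁ p / z₁ p) * (Dx (Dx u) p - Dy u p + c p * u p) =
      Dx (Dx (fun q => Dx u q - (Dx z₁ q / z₁ q) * u q)) p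
        - Dy (fun q => Dx u q - (Dx z₁ q / z₁ q) * u q) p
        - ((2 * (Dx z₁ p) ^ 2 - z₁ p * Dy z₁ p - Dx (Dx z₁) p * z₁ p) / (z₁ p) ^ 2)
          * (Dx u p - (Dx z₁ p / z₁ p) * u p) := by
  exact moutard_aux c z₁ (fun q => Dx z₁ q / z₁ q) u hc hz hz0 rfl hsol hu
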